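/- Let 𝒱 = {0, 1/n, …, (n−1)/n, 1}, let H be a finite set of CPL-satisfiable L_CPL-terms, and let λ be a PIL whose event belongs to H and whose constant belongs to 𝒱, such that λ is FP-satisfiable and λ^♭_𝒱 is defined and not FP-valid. Then there is no PIL λ' whose event belongs to H and whose constant belongs to 𝒱 such that λ ⊨_FP λ', λ' ⊨_FP λ^♭_𝒱, λ' ⊭_FP λ, and λ^♭_𝒱 ⊭_FP λ'. -/

import Mathlib

open scoped Classical

/-- Classical propositional formulas (the language `L_CPL`), built from
propositional variables (indexed by `ℕ`) using ¬, ∧, ∨. -/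
inductive CPL where
  | var : ℕ → CPL
  | neg : CPL → CPL
  | and : CPL → CPL → CPL
  | or : CPL → CPL → CPL
deriving DecidableEq

namespace CPL

/-- The set of propositional variables occurring in a formula. -/
def vars : CPL → Finset ℕ
  | var p => {p}
  | neg φ => vars φ
  | and φ χ => vars φ ∪ vars χ
  | or φ χ => vars φ ∪ vars χ

/-- Classical evaluation of a formula under a Boolean valuation. -/
def eval (v : ℕ → Bool) : CPL → Bool
  | var p => v p
  | neg φ => !eval v φ
  | and φ χ => eval v φ && eval v χ
  | or φ χ => eval v φ || eval v χ

/-- Evaluation of a formula at a state given as a set of variables: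
the variables in `X` are true, all others false. -/
def evalSet (X : Finset ℕ) (φ : CPL) : Bool := eval (fun p => decide (p ∈ X)) φ

/-- CPL-satisfiability. -/
def Satisfiable (φ : CPL) : Prop := ∃ v, eval v φ = true

/-- CPL-validity. -/
def Valid (φ : CPL) : Prop := ∀ v, eval v φ = true

/-- Classical entailment `φ ⊨_CPL χ`. -/
def Entails (φ χ : CPL) : Prop := ∀ v, eval v φ = true → eval v χ = true

/-- A literal: a variable or a negated variable. -/
def IsLiteral (φ : CPL) : Prop := (∃ p, φ = var p) ∨ ∃ p, φ = neg (var p)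

/-- An `L_CPL`-term: a conjunction of literals. -/
inductive IsTerm : CPL → Prop
  | lit {φ} : IsLiteral φ → IsTerm φ
  | conj {φ χ} : IsTerm φ → IsTerm χ → IsTerm (and φ χ)

/-- A conjunction of propositional variables. -/
inductive IsConjVars : CPL → Prop
  | var (p : ℕ) : IsConjVars (var p)
  | conj {φ χ} : IsConjVars φ → IsConjVars χ → IsConjVars (and φ χ)

/-- A disjunction of propositional variables. -/
inductive IsDisjVars : CPL → Prop
  | var (p : ℕ) : IsDisjVars (var p)
  | disj {φ χ} : IsDisjVars φ → IsDisjVars χ → IsDisjVars (or φ χ)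

/-- Variables occurring as positive literals (in a term). -/
def posVars : CPL → Finset ℕ
  | var p => {p}
  | neg _ => ∅
  | and φ χ => posVars φ ∪ posVars χ
  | or _ _ => ∅

/-- Variables occurring as negated literals (in a term). -/
def negVars : CPL → Finset ℕ
  | var _ => ∅
  | neg (var p) => {p}
  | neg _ => ∅
  | and φ χ => negVars φ ∪ negVars χ
  | or _ _ => ∅

/-- The literals occurring in a term. -/
def lits (φ : CPL) : Finset CPL :=
  (posVars φ).image var ∪ (negVars φ).image (fun p => neg (var p))

end CPL

/-- A state (possible world) over a finite set `V` of variables: a subset of `V`. -/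
abbrev World (V : Finset ℕ) := {X : Finset ℕ // X ⊆ V}

/-- A probabilistic model for `V`: a finitely additive probability measure
`μ : 2^(2^V) → [0,1]`. -/
structure ProbModel (V : Finset ℕ) where
  μ : Set (World V) → ℝ
  nonneg : ∀ A, 0 ≤ μ A
  le_one : ∀ A, μ A ≤ 1
  m_univ : μ Set.univ = 1
  m_empty : μ ∅ = 0
  m_add : ∀ A B : Set (World V), Disjoint A B → μ (A ∪ B) = μ A + μ B

/-- The truth set `‖φ‖_M` of a classical formula in a probabilistic model for `V`. -/
def truthSet (V : Finset ℕ) (φ : CPL) : Set (World V) :=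
  {w | CPL.evalSet w.1 φ = true}

/-- Comparison symbols ◇ ∈ {≤, <, >, ≥}. -/
inductive Ineq where
  | le | lt | gt | ge
deriving DecidableEq

/-- The relation denoted by a comparison symbol. -/
def Ineq.holds : Ineq → ℝ → ℝ → Prop
  | le, x, c => x ≤ c
  | lt, x, c => x < c
  | gt, x, c => x > c
  | ge, x, c => x ≥ c

/-- Formulas of the probabilistic language `L^Q_Pr`, built from probabilistic atoms
`Pr(φ)` and `Pr(φ)◇c̄` using ¬, △, ⊙, ⊕, →. -/
inductive FP where
  | prob : CPL → FP
  | probIneq : CPL → Ineq → ℚ → FP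
  | neg : FP → FP
  | delta : FP → FP
  | conj : FP → FP → FP
  | disj : FP → FP → FP
  | impl : FP → FP → FP
deriving DecidableEq

namespace FP

/-- Well-formedness: all rational constants lie in `[0,1] ∩ ℚ`. -/
def WF : FP → Prop
  | prob _ => True
  | probIneq _ _ c => 0 ≤ c ∧ c ≤ 1
  | neg α => WF α
  | delta α => WF α
  | conj α β => WF α ∧ WF β
  | disj α β => WF α ∧ WF β
  | impl α β => WF α ∧ WF β

/-- The variables of an `L^Q_Pr`-formula. -/
def vars : FP → Finset ℕ
  | prob φ => φ.vars
  | probIneq φ _ _ => φ.vars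
  | neg α => vars α
  | delta α => vars α
  | conj α β => vars α ∪ vars β
  | disj α β => vars α ∪ vars β
  | impl α β => vars α ∪ vars β

/-- The events `E(α)`: the classical formulas occurring in probabilistic atoms of `α`. -/
def events : FP → Finset CPL
  | prob φ => {φ}
  | probIneq φ _ _ => {φ}
  | neg α => events α
  | delta α => events α
  | conj α β => events α ∪ events β
  | disj α β => events α ∪ events β
  | impl α β => events α ∪ events β

/-- The FP-interpretation `I_M` induced by a probabilistic model `M`. -/
noncomputable def interp {V : Finset ℕ} (M : ProbModel V) : FP → ℝ
  | prob φ => M.μ (truthSet V φ)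
  | probIneq φ d c => if d.holds (M.μ (truthSet V φ)) (c : ℝ) then 1 else 0
  | neg α => 1 - interp M α
  | delta α => if interp M α = 1 then 1 else 0
  | conj α β => max 0 (interp M α + interp M β - 1)
  | disj α β => min 1 (interp M α + interp M β)
  | impl α β => min 1 (1 - interp M α + interp M β)

/-- `α` is FP-satisfiable: `I_M(α) = 1` in some probabilistic model for `Var(α)`. -/
def Satisfiable (α : FP) : Prop := ∃ M : ProbModel α.vars, interp M α = 1

/-- `α` is FP-valid: `I_M(α) = 1` in every probabilistic model for `Var(α)`. -/
def Valid (α : FP) : Prop := ∀ M : ProbModel α.vars, interp M α = 1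

/-- `α ⊨_FP β`: `I_M(β) = 1` in every probabilistic model for the variables of
`{α, β}` with `I_M(α) = 1`. -/
def Entails1 (α β : FP) : Prop :=
  ∀ M : ProbModel (α.vars ∪ β.vars), interp M α = 1 → interp M β = 1

/-- The variables of a finite set of `L^Q_Pr`-formulas. -/
def varsSet (Γ : Finset FP) : Finset ℕ := Γ.sup vars

/-- A finite set `Γ` is FP-satisfiable (`Γ ⊭_FP ⊥`): some probabilistic model for
the variables of `Γ` makes every member of `Γ` equal to `1`. -/
def SetSatisfiable (Γ : Finset FP) : Prop :=
  ∃ M : ProbModel (varsSet Γ), ∀ γ ∈ Γ, interp M γ = 1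

/-- `Γ ⊨_FP δ`: every probabilistic model for the variables of `Γ ∪ {δ}` satisfying
all of `Γ` satisfies `δ`. -/
def EntailsFin (Γ : Finset FP) (δ : FP) : Prop :=
  ∀ M : ProbModel (varsSet Γ ∪ δ.vars), (∀ γ ∈ Γ, interp M γ = 1) → interp M δ = 1

/-- `Γ ⊨^cons_FP δ`: `Γ ⊨_FP δ` and `Γ ⊭_FP ⊥`. -/
def ConsEntails (Γ : Finset FP) (δ : FP) : Prop :=
  EntailsFin Γ δ ∧ SetSatisfiable Γ

/-- The set of permitted values `V_Pr(Pr(φ)◇c̄)`. -/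
def permittedValues (φ : CPL) (d : Ineq) (c : ℚ) : Set ℝ :=
  {x | ∃ (V : Finset ℕ) (M : ProbModel V), φ.vars ⊆ V ∧
      interp M (probIneq φ d c) = 1 ∧ M.μ (truthSet V φ) = x}

end FP

/-- Formulas of the Łukasiewicz language `L^Q_Ł`, built from propositional variables
and truth-constant literals `p◇c̄` using ¬, △, ⊙, ⊕, →. -/
inductive Luk where
  | var : ℕ → Luk
  | ineq : ℕ → Ineq → ℚ → Luk
  | neg : Luk → Luk
  | delta : Luk → Luk
  | conj : Luk → Luk → Luk
  | disj : Luk → Luk → Luk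
  | impl : Luk → Luk → Luk
deriving DecidableEq

/-- An Ł-valuation: a function `Var → [0,1]`. -/
structure LukVal where
  v : ℕ → ℝ
  mem : ∀ p, v p ∈ Set.Icc (0 : ℝ) 1

/-- Extension of an Ł-valuation to all `L^Q_Ł`-formulas. -/
noncomputable def LukVal.eval (val : LukVal) : Luk → ℝ
  | .var p => val.v p
  | .ineq p d c => if d.holds (val.v p) (c : ℝ) then 1 else 0
  | .neg φ => 1 - val.eval φ
  | .delta φ => if val.eval φ = 1 then 1 else 0
  | .conj φ χ => max 0 (val.eval φ + val.eval χ - 1)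
  | .disj φ χ => min 1 (val.eval φ + val.eval χ)
  | .impl φ χ => min 1 (1 - val.eval φ + val.eval χ)

namespace Luk

/-- Well-formedness: all rational constants lie in `[0,1] ∩ ℚ`. -/
def WF : Luk → Prop
  | var _ => True
  | ineq _ _ c => 0 ≤ c ∧ c ≤ 1
  | neg φ => WF φ
  | delta φ => WF φ
  | conj φ χ => WF φ ∧ WF χ
  | disj φ χ => WF φ ∧ WF χ
  | impl φ χ => WF φ ∧ WF χ

/-- `Φ ⊨_Ł χ` for a finite set `Φ`. -/
def EntailsFin (Φ : Finset Luk) (χ : Luk) : Prop :=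
  ∀ val : LukVal, (∀ φ ∈ Φ, val.eval φ = 1) → val.eval χ = 1

/-- `φ` is Ł-valid. -/
def ValidL (φ : Luk) : Prop := ∀ val : LukVal, val.eval φ = 1

/-- A set of `L^Q_Ł`-formulas is Ł-satisfiable. -/
def SatisfiableSet (S : Set Luk) : Prop := ∃ val : LukVal, ∀ φ ∈ S, val.eval φ = 1

/-- The probabilistic counterpart `φ^Pr` of a Łukasiewicz formula. -/
def toFP : Luk → FP
  | var p => .prob (.var p)
  | ineq p d c => .probIneq (.var p) d c
  | neg φ => .neg (toFP φ)
  | delta φ => .delta (toFP φ)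
  | conj φ χ => .conj (toFP φ) (toFP χ)
  | disj φ χ => .disj (toFP φ) (toFP χ)
  | impl φ χ => .impl (toFP φ) (toFP χ)

end Luk

namespace FP

/-- The outer counterpart `α^↑` of an `L^Q_Pr`-formula, replacing each atom `Pr(φ)`
by the fresh variable `e φ` (and `Pr(φ)◇c̄` by `(e φ)◇c̄`). -/
def outer (e : CPL → ℕ) : FP → Luk
  | prob φ => .var (e φ)
  | probIneq φ d c => .ineq (e φ) d c
  | neg α => .neg (outer e α)
  | delta α => .delta (outer e α)
  | conj α β => .conj (outer e α) (outer e β)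
  | disj α β => .disj (outer e α) (outer e β)
  | impl α β => .impl (outer e α) (outer e β)

end FP

/-- The ⊙-conjunction of a (nonempty) list of `L^Q_Pr`-formulas. -/
def bigConjFP : List FP → FP
  | [] => .probIneq (.var 0) .ge 0
  | a :: t => t.foldl .conj a

/-- The ∨-disjunction of a (nonempty) list of classical formulas. -/
def bigDisjCPL : List CPL → CPL
  | [] => .var 0
  | a :: t => t.foldl .or a

/-- The PIT `⊙_i Pr(τ_i)≤c̄_i ⊙ ⊙_i Pr(τ_i)≥c̄_i` associated with the list of
pairs `(τ_i, c_i)`. -/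
def completePITFormula (L : List (CPL × ℚ)) : FP :=
  bigConjFP (L.map (fun t => FP.probIneq t.1 .le t.2) ++
             L.map (fun t => FP.probIneq t.1 .ge t.2))

/-- `τ` is an `L_CPL`-term containing, for every `p ∈ V`, exactly one of the
literals `p` and `¬p` (and no other variables). -/
def IsCompleteTermOver (V : Finset ℕ) (τ : CPL) : Prop :=
  CPL.IsTerm τ ∧ τ.vars ⊆ V ∧ ∀ p ∈ V, (p ∈ τ.posVars ↔ p ∉ τ.negVars)

/-- Membership in `𝒱 = {0, 1/n, …, (n−1)/n, 1}`. -/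
def memVSet (n : ℕ) (c : ℚ) : Prop := ∃ k : ℕ, k ≤ n ∧ c = (k : ℚ) / (n : ℚ)

/-- The data `(τ_i, c_i)` of a `⟨V,𝒱⟩`-complete PIT (with `𝒱` given by `n`). -/
def IsCompletePIT (V : Finset ℕ) (n : ℕ) (L : List (CPL × ℚ)) : Prop :=
  (L.map Prod.fst).Nodup ∧
  (∀ t ∈ L, IsCompleteTermOver V t.1 ∧ memVSet n t.2) ∧
  (L.map Prod.snd).sum = 1

/-- A measure is coherent with a value assignment `pr` on the events `E`. -/
def coherent {V : Finset ℕ} (M : ProbModel V) (E : Finset CPL) (pr : CPL → ℚ) : Prop :=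
  ∀ ψ ∈ E, M.μ (truthSet V ψ) = (pr ψ : ℝ)

/-- Conditional probability `Pr_μ(φ | χ) = μ(‖φ∧χ‖)/μ(‖χ‖)`. -/
noncomputable def condProb {V : Finset ℕ} (M : ProbModel V) (φ χ : CPL) : ℝ :=
  M.μ (truthSet V (CPL.and φ χ)) / M.μ (truthSet V χ)

/-- `τ` is a solution to the PrAP `⟨{φ}, χ, H, E, pr⟩`: an `L_CPL`-term composed of
literals from `H` s.t. `φ, τ ⊨_CPL χ` and some probabilistic model coherent with `pr`
gives `μ(‖φ∧τ‖) > 0`. -/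
def IsPrAPSolution (φ χ : CPL) (H E : Finset CPL) (pr : CPL → ℚ) (τ : CPL) : Prop :=
  CPL.IsTerm τ ∧ τ.lits ⊆ H ∧
  (∀ v, CPL.eval v φ = true → CPL.eval v τ = true → CPL.eval v χ = true) ∧
  ∃ M : ProbModel (φ.vars ∪ χ.vars),
    coherent M E pr ∧ 0 < M.μ (truthSet (φ.vars ∪ χ.vars) (CPL.and φ τ))

/-- `τ` is a preferred solution: a solution s.t. for every other solution `σ` there is
a probabilistic model coherent with `pr` with `μ(‖τ‖) ≥ μ(‖σ‖)`. -/
def IsPreferredPrAPSolution (φ χ : CPL) (H E : Finset CPL) (pr : CPL → ℚ) (τ : CPL) : Prop :=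
  IsPrAPSolution φ χ H E pr τ ∧
  ∀ σ, IsPrAPSolution φ χ H E pr σ → σ ≠ τ →
    ∃ M : ProbModel (φ.vars ∪ χ.vars),
      coherent M E pr ∧
      M.μ (truthSet (φ.vars ∪ χ.vars) σ) ≤ M.μ (truthSet (φ.vars ∪ χ.vars) τ)

/-- The FP-counterpart `Ξ_p = {Pr(ψ)≈c̄ : ψ ∈ E, p(ψ) = c}` of a value assignment,
where `Pr(ψ)≈c̄` abbreviates `(Pr(ψ)≥c̄) ⊙ (Pr(ψ)≤c̄)`. -/
def XiP (E : Finset CPL) (pr : CPL → ℚ) : Finset FP :=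
  E.image (fun ψ => FP.conj (FP.probIneq ψ .ge (pr ψ)) (FP.probIneq ψ .le (pr ψ)))

/-- The next weakest PIL `λ^♭_𝒱` of the PIL `Pr(τ)◇(k/n)`. -/
def flatPIL (n : ℕ) (τ : CPL) (d : Ineq) (k : ℕ) : FP :=
  match d with
  | .ge => FP.probIneq τ .gt (((k : ℚ) - 1) / (n : ℚ))
  | .gt => FP.probIneq τ .ge ((k : ℚ) / (n : ℚ))
  | .le => FP.probIneq τ .lt (((k : ℚ) + 1) / (n : ℚ))
  | .lt => FP.probIneq τ .le ((k : ℚ) / (n : ℚ))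

/-- The theory `Ψ_Γ = Γ^↑ ∪ {p_φ → p_χ : φ, χ ∈ E[Γ], φ ⊨_CPL χ}`. -/
def PsiGamma (Γ : Finset FP) (e : CPL → ℕ) : Set Luk :=
  (fun α => FP.outer e α) '' (↑Γ : Set FP) ∪
  {ψ | ∃ φ ∈ Γ.sup FP.events, ∃ χ ∈ Γ.sup FP.events,
        CPL.Entails φ χ ∧ ψ = Luk.impl (.var (e φ)) (.var (e χ))}

/-- The conjunction `hd ∧ ⋀_{q ∈ s} q`. -/
def conjVarsFrom (hd : CPL) (s : Finset ℕ) : CPL :=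
  (s.sort (· ≤ ·)).foldl (fun acc q => CPL.and acc (CPL.var q)) hd

/-!
A PIL `λ' = Pr(τ')◇'c'` strictly between `λ = Pr(τ)◇(k/n)` and `λ^♭` must have an event
equivalent to `τ` or to `¬τ`. Otherwise a valuation puts `τ` at the value where `λ` is
easiest to satisfy and `τ'` at the value where `λ'` is hardest to satisfy (or the reverse),
and its Dirac measure refutes `λ ⊨_FP λ'` (or `λ' ⊨_FP λ^♭`). So `Pr(τ')` is `Pr(τ)` or
`1 - Pr(τ)` in every model, and `λ'` becomes a comparison of `Pr(τ)` with a grid point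
`m/n`. The models witnessing the two non-entailments give values of `Pr(τ)` where `λ^♭`
holds and `λ` fails, and all such values lie in one open grid cell or are one grid point,
so no comparison with a grid point tells them apart.
-/

namespace Ineq

def isUpper : Ineq → Bool
  | le => false
  | lt => false
  | gt => true
  | ge => true

def flip : Ineq → Ineq
  | le => ge
  | lt => gt
  | gt => lt
  | ge => le

/-- The comparison symbol of `λ^♭_𝒱`. -/
def flat : Ineq → Ineq
  | le => lt
  | lt => le
  | gt => ge
  | ge => gt

theorem isUpper_flat (d : Ineq) : d.flat.isUpper = d.isUpper := by
  cases d <;> rfl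

theorem holds_one_sub_iff (d : Ineq) (x c : ℝ) :
    d.holds (1 - x) c ↔ d.flip.holds x (1 - c) := by
  cases d <;> simp only [holds, flip] <;> constructor <;> intro <;> linarith

theorem holds_extreme {d : Ineq} {x c : ℝ} (hx : x ∈ Set.Icc 0 1) (h : d.holds x c) :
    d.holds (if d.isUpper then 1 else 0) c := by
  obtain ⟨hx0, hx1⟩ := hx
  cases d <;> simp only [holds, isUpper] at h ⊢ <;> norm_num <;> linarith

theorem not_holds_extreme {d : Ineq} {x c : ℝ} (hx : x ∈ Set.Icc 0 1) (h : ¬ d.holds x c) :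
    ¬ d.holds (if d.isUpper then 0 else 1) c := by
  obtain ⟨hx0, hx1⟩ := hx
  cases d <;> simp only [holds, isUpper, not_le, not_lt] at h ⊢ <;> norm_num <;> linarith

theorem holds_iff_of_mem_Ioo (d : Ineq) {a b c x y : ℝ} (hc : c ≤ a ∨ b ≤ c)
    (hx : x ∈ Set.Ioo a b) (hy : y ∈ Set.Ioo a b) : d.holds x c ↔ d.holds y c := by
  obtain ⟨hax, hxb⟩ := hx
  obtain ⟨hay, hyb⟩ := hy
  cases d <;> rcases hc with hc | hc <;> simp only [holds] <;> constructor <;> intro <;>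
    linarith

theorem holds_div_iff_of_mem_Ioo (d : Ineq) {n : ℕ} (hn : 0 < n) (j m : ℤ) {x y : ℝ}
    (hx : x ∈ Set.Ioo ((j : ℝ) / n) ((j + 1) / n))
    (hy : y ∈ Set.Ioo ((j : ℝ) / n) ((j + 1) / n)) :
    d.holds x ((m : ℝ) / n) ↔ d.holds y ((m : ℝ) / n) := by
  have hn' : (0 : ℝ) < n := Nat.cast_pos.mpr hn
  refine d.holds_iff_of_mem_Ioo ?_ hx hy
  rcases le_or_gt m j with h | h
  · exact Or.inl (div_le_div_of_nonneg_right (Int.cast_le.mpr h) hn'.le)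
  · refine Or.inr (div_le_div_of_nonneg_right ?_ hn'.le)
    exact_mod_cast Int.add_one_le_iff.mpr h

end Ineq

theorem CPL.eval_congr {φ : CPL} {v v' : ℕ → Bool} (h : ∀ p ∈ φ.vars, v p = v' p) :
    CPL.eval v φ = CPL.eval v' φ := by
  induction φ with
  | var p => exact h p (Finset.mem_singleton_self p)
  | neg φ ih => simp only [CPL.eval, ih h]
  | and φ χ ih₁ ih₂ | or φ χ ih₁ ih₂ =>
    simp only [CPL.eval, ih₁ fun p hp => h p (Finset.mem_union_left _ hp),
      ih₂ fun p hp => h p (Finset.mem_union_right _ hp)]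

def World.ofValuation (V : Finset ℕ) (v : ℕ → Bool) : World V :=
  ⟨V.filter (fun p => v p = true), Finset.filter_subset _ _⟩

theorem CPL.evalSet_ofValuation {V : Finset ℕ} (v : ℕ → Bool) {φ : CPL} (h : φ.vars ⊆ V) :
    CPL.evalSet (World.ofValuation V v).1 φ = CPL.eval v φ := by
  refine CPL.eval_congr fun p hp => ?_
  cases hv : v p <;> simp [World.ofValuation, h hp, hv]

theorem truthSet_eq_of_eval_eq {V : Finset ℕ} {φ ψ : CPL}
    (h : ∀ v, CPL.eval v ψ = CPL.eval v φ) : truthSet V ψ = truthSet V φ := by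
  ext w
  simp only [truthSet, Set.mem_ofPred_eq, CPL.evalSet, h]

theorem truthSet_eq_compl_of_eval_eq_not {V : Finset ℕ} {φ ψ : CPL}
    (h : ∀ v, CPL.eval v ψ = !CPL.eval v φ) : truthSet V ψ = (truthSet V φ)ᶜ := by
  ext w
  simp [truthSet, CPL.evalSet, h]

namespace ProbModel

variable {V : Finset ℕ}

noncomputable def dirac (w : World V) : ProbModel V where
  μ S := if w ∈ S then 1 else 0
  nonneg S := by split <;> norm_num
  le_one S := by split <;> norm_num
  m_univ := by simp
  m_empty := by simp
  m_add A B hAB := by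
    by_cases hA : w ∈ A
    · simp [hA, Set.disjoint_left.mp hAB hA]
    · by_cases hB : w ∈ B <;> simp [hA, hB]

theorem dirac_truthSet_ofValuation (v : ℕ → Bool) {φ : CPL} (h : φ.vars ⊆ V) :
    (dirac (World.ofValuation V v)).μ (truthSet V φ) = if CPL.eval v φ then 1 else 0 := by
  simp only [dirac, truthSet, Set.mem_ofPred_eq, CPL.evalSet_ofValuation v h]

theorem μ_mem_Icc (M : ProbModel V) (S : Set (World V)) : M.μ S ∈ Set.Icc 0 1 :=
  ⟨M.nonneg S, M.le_one S⟩

theorem μ_compl (M : ProbModel V) (S : Set (World V)) : M.μ Sᶜ = 1 - M.μ S := by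
  have h := M.m_add S Sᶜ disjoint_compl_right
  rw [Set.union_compl_self, M.m_univ] at h
  linarith

end ProbModel

theorem FP.interp_probIneq_eq_one {V : Finset ℕ} (M : ProbModel V) (φ : CPL) (d : Ineq)
    (c : ℚ) : FP.interp M (FP.probIneq φ d c) = 1 ↔ d.holds (M.μ (truthSet V φ)) c := by
  simp only [FP.interp]
  split_ifs with h <;> simp [h]

theorem eval_eq_isUpper_of_entails {φ ψ : CPL} {d e : Ineq} {c q : ℚ} {V W : Finset ℕ}
    (h : FP.Entails1 (FP.probIneq φ d c) (FP.probIneq ψ e q))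
    (M : ProbModel V) (hM : FP.interp M (FP.probIneq φ d c) = 1)
    (N : ProbModel W) (hN : FP.interp N (FP.probIneq ψ e q) ≠ 1)
    (v : ℕ → Bool) (hv : CPL.eval v φ = d.isUpper) : CPL.eval v ψ = e.isUpper := by
  set U := (FP.probIneq φ d c).vars ∪ (FP.probIneq ψ e q).vars
  let D := ProbModel.dirac (World.ofValuation U v)
  have hDφ : D.μ (truthSet U φ) = if CPL.eval v φ then 1 else 0 :=
    ProbModel.dirac_truthSet_ofValuation v Finset.subset_union_left
  have hDψ : D.μ (truthSet U ψ) = if CPL.eval v ψ then 1 else 0 :=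
    ProbModel.dirac_truthSet_ofValuation v Finset.subset_union_right
  have hφ : FP.interp D (FP.probIneq φ d c) = 1 := by
    rw [FP.interp_probIneq_eq_one, hDφ, hv]
    exact Ineq.holds_extreme (M.μ_mem_Icc _) ((FP.interp_probIneq_eq_one ..).1 hM)
  have hψ := (FP.interp_probIneq_eq_one ..).1 (h D hφ)
  rw [hDψ] at hψ
  have hbad := Ineq.not_holds_extreme (N.μ_mem_Icc _) (mt (FP.interp_probIneq_eq_one ..).2 hN)
  cases he : e.isUpper <;> cases hψv : CPL.eval v ψ <;> simp_all

theorem Bool.eq_or_eq_not_of_eq_iff_eq {α : Type*} {f g : α → Bool} {b b' : Bool}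
    (h : ∀ a, f a = b ↔ g a = b') : (∀ a, g a = f a) ∨ (∀ a, g a = !f a) := by
  by_cases hb : b' = b
  · subst hb
    left
    intro a
    have := h a
    revert this
    cases f a <;> cases g a <;> cases b' <;> simp
  · right
    intro a
    have := h a
    revert this
    cases f a <;> cases g a <;> cases b <;> cases b' <;> simp_all

theorem exists_separated_of_strictly_between {τ τ' : CPL} {d df d' : Ineq} {c cf c' : ℚ}
    (hup : df.isUpper = d.isUpper)
    (hsat : FP.Satisfiable (FP.probIneq τ d c)) (hnval : ¬ FP.Valid (FP.probIneq τ df cf))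
    (h1 : FP.Entails1 (FP.probIneq τ d c) (FP.probIneq τ' d' c'))
    (h2 : FP.Entails1 (FP.probIneq τ' d' c') (FP.probIneq τ df cf))
    (h3 : ¬ FP.Entails1 (FP.probIneq τ' d' c') (FP.probIneq τ d c))
    (h4 : ¬ FP.Entails1 (FP.probIneq τ df cf) (FP.probIneq τ' d' c')) :
    ∃ x₁ x₂ : ℝ, (df.holds x₁ cf ∧ ¬ d.holds x₁ c) ∧ (df.holds x₂ cf ∧ ¬ d.holds x₂ c) ∧
      ∃ (e : Ineq) (r : ℝ), (r = c' ∨ r = 1 - c') ∧ e.holds x₁ r ∧ ¬ e.holds x₂ r := by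
  obtain ⟨M, hM⟩ := hsat
  obtain ⟨N, hN⟩ := not_forall.mp hnval
  simp only [FP.Entails1, not_forall, exists_prop] at h3 h4
  obtain ⟨M₁, hM₁', hM₁⟩ := h3
  obtain ⟨M₂, hM₂f, hM₂'⟩ := h4
  have hequiv : ∀ v, CPL.eval v τ = d.isUpper ↔ CPL.eval v τ' = d'.isUpper := fun v =>
    ⟨eval_eq_isUpper_of_entails h1 M hM M₂ hM₂' v,
      fun hv => hup ▸ eval_eq_isUpper_of_entails h2 M₁ hM₁' N hN v hv⟩
  have hM₁f := (FP.interp_probIneq_eq_one M₁ τ df cf).1 (h2 M₁ hM₁')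
  have hM₂ : ¬ d.holds (M₂.μ (truthSet _ τ)) c := fun h =>
    hM₂' (h1 M₂ ((FP.interp_probIneq_eq_one M₂ τ d c).2 h))
  rw [FP.interp_probIneq_eq_one] at hM₁' hM₁ hM₂f hM₂'
  refine ⟨_, _, ⟨hM₁f, hM₁⟩, ⟨hM₂f, hM₂⟩, ?_⟩
  rcases Bool.eq_or_eq_not_of_eq_iff_eq hequiv with h | h
  · rw [truthSet_eq_of_eval_eq h] at hM₁' hM₂'
    exact ⟨d', c', Or.inl rfl, hM₁', hM₂'⟩
  · rw [truthSet_eq_compl_of_eval_eq_not h, ProbModel.μ_compl, Ineq.holds_one_sub_iff]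
      at hM₁' hM₂'
    exact ⟨d'.flip, 1 - c', Or.inr rfl, hM₁', hM₂'⟩

/-- The constant of `λ^♭_𝒱` for `λ = Pr(τ)◇(k/n)`. -/
def flatConst (n : ℕ) (d : Ineq) (k : ℕ) : ℚ :=
  match d with
  | .ge => ((k : ℚ) - 1) / n
  | .le => ((k : ℚ) + 1) / n
  | .gt | .lt => (k : ℚ) / n

theorem flatPIL_eq_probIneq (n : ℕ) (τ : CPL) (d : Ineq) (k : ℕ) :
    flatPIL n τ d k = FP.probIneq τ d.flat (flatConst n d k) := by
  cases d <;> rfl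

-- The values where `λ^♭_𝒱` holds and `λ` fails form an open cell of the grid `ℤ/n` or
-- a single grid point.
theorem Ineq.holds_div_iff_of_flat_gap {n : ℕ} (hn : 0 < n) {d : Ineq} {k : ℕ} {x y : ℝ}
    (hx : d.flat.holds x (flatConst n d k) ∧ ¬ d.holds x ((k : ℚ) / n : ℚ))
    (hy : d.flat.holds y (flatConst n d k) ∧ ¬ d.holds y ((k : ℚ) / n : ℚ))
    (e : Ineq) (m : ℤ) : e.holds x ((m : ℝ) / n) ↔ e.holds y ((m : ℝ) / n) := by
  cases d <;> simp only [flat, flatConst, holds, not_le, not_lt] at hx hy <;> push_cast at hx hy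
  case le =>
    refine e.holds_div_iff_of_mem_Ioo hn k m ?_ ?_ <;> push_cast
    exacts [⟨hx.2, hx.1⟩, ⟨hy.2, hy.1⟩]
  case ge => refine e.holds_div_iff_of_mem_Ioo hn (k - 1) m ?_ ?_ <;> push_cast <;> simpa
  case lt => rw [le_antisymm hx.1 hx.2, le_antisymm hy.1 hy.2]
  case gt => rw [le_antisymm hx.2 hx.1, le_antisymm hy.2 hy.1]

theorem stmt17_general (n : ℕ) (hn : 0 < n) (H : Finset CPL)
    (τ : CPL) (d : Ineq) (k : ℕ)
    (hsat : FP.Satisfiable (FP.probIneq τ d ((k : ℚ) / (n : ℚ))))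
    (hnval : ¬ FP.Valid (flatPIL n τ d k)) :
    ¬ ∃ (τ' : CPL) (d' : Ineq) (k' : ℕ), τ' ∈ H ∧ k' ≤ n ∧
      FP.Entails1 (FP.probIneq τ d ((k : ℚ) / (n : ℚ)))
        (FP.probIneq τ' d' ((k' : ℚ) / (n : ℚ))) ∧
      FP.Entails1 (FP.probIneq τ' d' ((k' : ℚ) / (n : ℚ))) (flatPIL n τ d k) ∧
      ¬ FP.Entails1 (FP.probIneq τ' d' ((k' : ℚ) / (n : ℚ)))
        (FP.probIneq τ d ((k : ℚ) / (n : ℚ))) ∧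
      ¬ FP.Entails1 (flatPIL n τ d k) (FP.probIneq τ' d' ((k' : ℚ) / (n : ℚ))) := by
  rintro ⟨τ', d', k', -, -, h1, h2, h3, h4⟩
  rw [flatPIL_eq_probIneq] at hnval h2 h4
  obtain ⟨x₁, x₂, hx₁, hx₂, e, r, hr, he₁, he₂⟩ :=
    exists_separated_of_strictly_between d.isUpper_flat hsat hnval h1 h2 h3 h4
  have hn' : (n : ℝ) ≠ 0 := Nat.cast_ne_zero.mpr hn.ne'
  obtain ⟨m, rfl⟩ : ∃ m : ℤ, r = m / n := by
    rcases hr with rfl | rfl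
    · exact ⟨k', by push_cast; rfl⟩
    · exact ⟨n - k', by push_cast; field_simp⟩
  exact he₂ ((Ineq.holds_div_iff_of_flat_gap hn hx₁ hx₂ e m).1 he₁)

/-- Let `𝒱 = {0, 1/n, …, 1}`, `H` a finite set of CPL-satisfiable
`L_CPL`-terms, and `λ = Pr(τ)◇(k/n)` a PIL with event in `H` and constant in `𝒱` such
that `λ` is FP-satisfiable and `λ^♭_𝒱` is defined and not FP-valid. Then there is no
PIL `λ'` with event in `H` and constant in `𝒱` such that `λ ⊨_FP λ'`, `λ' ⊨_FP λ^♭_𝒱`,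
`λ' ⊭_FP λ`, and `λ^♭_𝒱 ⊭_FP λ'`. -/
theorem stmt17 (n : ℕ) (hn : 0 < n) (H : Finset CPL)
    (hH : ∀ σ ∈ H, CPL.IsTerm σ ∧ CPL.Satisfiable σ)
    (τ : CPL) (hτ : τ ∈ H) (d : Ineq) (k : ℕ) (hk : k ≤ n)
    (hdefge : d = .ge → 1 ≤ k) (hdefle : d = .le → k < n)
    (hsat : FP.Satisfiable (FP.probIneq τ d ((k : ℚ) / (n : ℚ))))
    (hnval : ¬ FP.Valid (flatPIL n τ d k)) :
    ¬ ∃ (τ' : CPL) (d' : Ineq) (k' : ℕ), τ' ∈ H ∧ k' ≤ n ∧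
      FP.Entails1 (FP.probIneq τ d ((k : ℚ) / (n : ℚ)))
        (FP.probIneq τ' d' ((k' : ℚ) / (n : ℚ))) ∧
      FP.Entails1 (FP.probIneq τ' d' ((k' : ℚ) / (n : ℚ))) (flatPIL n τ d k) ∧
      ¬ FP.Entails1 (FP.probIneq τ' d' ((k' : ℚ) / (n : ℚ)))
        (FP.probIneq τ d ((k : ℚ) / (n : ℚ))) ∧
      ¬ FP.Entails1 (flatPIL n τ d k) (FP.probIneq τ' d' ((k' : ℚ) / (n : ℚ))) :=
  stmt17_general n hn H τ d k hsat hnval
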